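/- Let n be a positive integer, X ∈ 𝒯(n) a triangulation of the punctured n-gon, and a := top(X). Let k < l be integers with 2 ≤ l − k ≤ n such that a'_m < ‖a'‖ for every integer m with k + 1 ≤ m ≤ l − 1. Then the inner arc (k mod n, l − k) belongs to X if and only if both of the following hold: (a) a'_m < a'_k for every integer m with k + 1 ≤ m ≤ l − 1; and (b) there exists an integer s with 1 ≤ s ≤ a_{(l)_n} − δ_l and a'_k = a'_{l−1} + s. (Adachi, Lemma characterizing inner arcs of a triangulation in terms of top(X), part (2) of the lemma preceding the injectivity proposition.) -/

import Mathlib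

/-!
Combinatorial model of admissible arcs and triangulations of a regular
`n`-gon with one puncture (following Adachi, "The classification of
τ-tilting modules over Nakayama algebras").
-/

namespace Punctured

/-- Admissible arcs in a regular `n`-gon with one puncture:
an *inner arc* `inner i t` runs counterclockwise from vertex `i` to vertex
`i + t` (with `2 ≤ t ≤ n` required for admissibility); a *projective arc*
`proj j` runs from the puncture to the vertex `j`. -/
inductive Arc (n : ℕ) : Type
  | inner (i : ZMod n) (t : ℕ) : Arc n
  | proj (j : ZMod n) : Arc n

namespace Arc

/-- The terminal point of an admissible arc. -/
def terminal {n : ℕ} : Arc n → ZMod n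
  | .inner i t => i + (t : ZMod n)
  | .proj j => j

/-- Admissibility: inner arcs must have length `2 ≤ t ≤ n`. -/
def IsAdmissible {n : ℕ} : Arc n → Prop
  | .inner _ t => 2 ≤ t ∧ t ≤ n
  | .proj _ => True

/-- Compatibility (non-crossing) of two admissible arcs, defined via
lifts to `ℤ`. -/
def Compatible {n : ℕ} : Arc n → Arc n → Prop
  | .inner i t, .inner k s =>
      ¬ ∃ x y : ℤ, (x : ZMod n) = i ∧ (y : ZMod n) = k ∧
        ((x < y ∧ y < x + (t : ℤ) ∧ x + (t : ℤ) < y + (s : ℤ)) ∨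
         (y < x ∧ x < y + (s : ℤ) ∧ y + (s : ℤ) < x + (t : ℤ)))
  | .inner i t, .proj j =>
      ¬ ∃ x y : ℤ, (x : ZMod n) = i ∧ (y : ZMod n) = j ∧ x < y ∧ y < x + (t : ℤ)
  | .proj j, .inner i t =>
      ¬ ∃ x y : ℤ, (x : ZMod n) = i ∧ (y : ZMod n) = j ∧ x < y ∧ y < x + (t : ℤ)
  | .proj _, .proj _ => True

end Arc

/-- A set of admissible arcs which is pairwise compatible. -/
def PairwiseCompatible (n : ℕ) (X : Set (Arc n)) : Prop :=
  (∀ a ∈ X, a.IsAdmissible) ∧ ∀ a ∈ X, ∀ b ∈ X, a.Compatible b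

/-- A triangulation of the punctured `n`-gon: a pairwise compatible set of
admissible arcs, maximal under inclusion among such sets. -/
def IsTriangulation (n : ℕ) (X : Set (Arc n)) : Prop :=
  PairwiseCompatible n X ∧
    ∀ Y : Set (Arc n), PairwiseCompatible n Y → X ⊆ Y → Y = X

/-- `top(X)`: for each residue class `c`, the number of arcs of `X` with
terminal point `c`. -/
noncomputable def topSeq (n : ℕ) (X : Set (Arc n)) : ZMod n → ℕ :=
  fun c => {arc ∈ X | Arc.terminal arc = c}.ncard

/-- The representative of `p` modulo `n` lying in `{1, …, n}`. -/
def resRep (n : ℕ) (p : ℤ) : ℕ := ((p - 1) % (n : ℤ)).toNat + 1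

/-- `a'_p := Σ_{j=1}^{(p)_n} (a_j - 1)`, the `n`-periodic extension of the
partial-sum sequence of `a`. -/
def psum (n : ℕ) (a : ZMod n → ℕ) (p : ℤ) : ℤ :=
  ∑ j ∈ Finset.Icc 1 (resRep n p), ((a ((j : ℕ) : ZMod n) : ℤ) - 1)

/-- `‖a'‖ := max {a'_1, …, a'_n}`. -/
noncomputable def pnorm (n : ℕ) (a : ZMod n → ℕ) : ℤ :=
  sSup ((fun i : ℕ => psum n a (i : ℤ)) '' Set.Icc 1 n)

/-- `δ_p = 1` if `a'_p = ‖a'‖` and `δ_p = 0` otherwise. -/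
noncomputable def deltaInt (n : ℕ) (a : ZMod n → ℕ) (p : ℤ) : ℤ :=
  if psum n a p = pnorm n a then 1 else 0

/-- `k_s^j := max {k ∈ ℤ : k < j - 1 and a'_k = a'_{j-1} + s}`. -/
noncomputable def kmax (n : ℕ) (a : ZMod n → ℕ) (j s : ℤ) : ℤ :=
  sSup {k : ℤ | k < j - 1 ∧ psum n a k = psum n a (j - 1) + s}

/-- `ℓ_j(a)`. -/
noncomputable def ellj (n : ℕ) (a : ZMod n → ℕ) (j : ℕ) : ℤ :=
  if (a ((j : ℕ) : ZMod n) : ℤ) - deltaInt n a (j : ℤ) = 0 then 0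
  else (j : ℤ) - kmax n a (j : ℤ) ((a ((j : ℕ) : ZMod n) : ℤ) - deltaInt n a (j : ℤ))

/-!
A triangulation `X` contains a projective arc, say at `J`. Cutting along it turns `X` into a
triangulation of the polygon with vertices `J, …, J + n` and the puncture `J + n + 1`, and `a_p`
counts the chords whose terminal point lifts to `p`. Since a maximal noncrossing family of chords
below a chord `(u, v)` has exactly `v - u - 1` members, differences `a'_q - a'_p` become chord
counts. Hence `a'` attains its maximum at `J` and at the projective arcs, stays strictly below
`a'_u` under a chord `(u, v)`, and satisfies `a'_u ≤ a'_v + 1`. Conditions (a) and (b) are exactly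
what rules out a chord crossing `(k, l)`.
-/

def Cross (c d : ℤ × ℤ) : Prop :=
  (c.1 < d.1 ∧ d.1 < c.2 ∧ c.2 < d.2) ∨ (d.1 < c.1 ∧ c.1 < d.2 ∧ d.2 < c.2)

def IsChordOn (L R : ℤ) (c : ℤ × ℤ) : Prop :=
  L ≤ c.1 ∧ c.1 + 2 ≤ c.2 ∧ c.2 ≤ R

def Noncrossing (F : Finset (ℤ × ℤ)) : Prop :=
  ∀ c ∈ F, ∀ d ∈ F, ¬ Cross c d

section Counting

variable {F : Finset (ℤ × ℤ)} {L R : ℤ}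

theorem Noncrossing.filter (hF : Noncrossing F) (p : ℤ × ℤ → Prop) [DecidablePred p] :
    Noncrossing (F.filter p) := fun c hc d hd =>
  hF c (Finset.mem_of_mem_filter c hc) d (Finset.mem_of_mem_filter d hd)

/-- The largest `z < c.2` with `(c.1, z) ∈ F`, or `c.1 + 1` if there is none. On a noncrossing
family of chords on `L, …, R` this is injective with values in `(L, R)`, and it is onto when the
family is maximal and contains `(L, R)`. -/
def innerEnd (F : Finset (ℤ × ℤ)) (c : ℤ × ℤ) : ℤ :=
  (insert (c.1 + 1) ((F.filter fun d => d.1 = c.1 ∧ d.2 < c.2).image Prod.snd)).max'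
    (Finset.insert_nonempty _ _)

theorem le_innerEnd_of_mem {c : ℤ × ℤ} {z : ℤ} (hz : (c.1, z) ∈ F) (hzc : z < c.2) :
    z ≤ innerEnd F c :=
  Finset.le_max' _ _ <| Finset.mem_insert_of_mem <| Finset.mem_image_of_mem Prod.snd
    (Finset.mem_filter.2 ⟨hz, rfl, hzc⟩ : (c.1, z) ∈ F.filter fun d => d.1 = c.1 ∧ d.2 < c.2)

theorem add_one_le_innerEnd (c : ℤ × ℤ) : c.1 + 1 ≤ innerEnd F c :=
  Finset.le_max' _ _ (Finset.mem_insert_self _ _)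

theorem innerEnd_eq_or_mem (c : ℤ × ℤ) :
    innerEnd F c = c.1 + 1 ∨ ((c.1, innerEnd F c) ∈ F ∧ innerEnd F c < c.2) := by
  have h := Finset.max'_mem _ (Finset.insert_nonempty (c.1 + 1)
    ((F.filter fun d => d.1 = c.1 ∧ d.2 < c.2).image Prod.snd))
  rw [Finset.mem_insert, Finset.mem_image] at h
  obtain h | ⟨d, hd, hde⟩ := h
  · exact .inl h
  · obtain ⟨hdF, hd1, hd2⟩ := Finset.mem_filter.1 hd
    refine .inr ⟨?_, ?_⟩ <;> simp only [innerEnd, ← hde]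
    · rwa [← hd1]
    · exact hd2

theorem innerEnd_lt {c : ℤ × ℤ} (hc : c.1 + 2 ≤ c.2) : innerEnd F c < c.2 := by
  rcases innerEnd_eq_or_mem (F := F) c with h | h <;> omega

theorem innerEnd_ne (hF : ∀ c ∈ F, c.1 + 2 ≤ c.2) (hnc : Noncrossing F) {c d : ℤ × ℤ}
    (hc : c ∈ F) (hd : d ∈ F) (hcd : c.1 < d.1 ∨ (c.1 = d.1 ∧ c.2 < d.2)) :
    innerEnd F c ≠ innerEnd F d := by
  intro h
  have hc2 := hF c hc
  have hd2 := hF d hd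
  have hd1 := add_one_le_innerEnd (F := F) d
  have hdlt := innerEnd_lt (F := F) hd2
  have hclt := innerEnd_lt (F := F) hc2
  rcases hcd with hcd | ⟨hcd, hcd'⟩
  · rcases innerEnd_eq_or_mem (F := F) c with h3 | ⟨h3, -⟩
    · omega
    · exact hnc _ h3 d hd (.inl ⟨hcd, by omega, by omega⟩)
  · have := le_innerEnd_of_mem (F := F) (c := d) (z := c.2) (by rw [← hcd]; exact hc) hcd'
    omega

theorem injOn_innerEnd (hF : ∀ c ∈ F, c.1 + 2 ≤ c.2) (hnc : Noncrossing F) :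
    Set.InjOn (innerEnd F) F := by
  intro c hc d hd h
  rcases lt_trichotomy c.1 d.1 with h1 | h1 | h1
  · exact absurd h (innerEnd_ne hF hnc hc hd (.inl h1))
  · rcases lt_trichotomy c.2 d.2 with h2 | h2 | h2
    · exact absurd h (innerEnd_ne hF hnc hc hd (.inr ⟨h1, h2⟩))
    · exact Prod.ext h1 h2
    · exact absurd h.symm (innerEnd_ne hF hnc hd hc (.inr ⟨h1.symm, h2⟩))
  · exact absurd h.symm (innerEnd_ne hF hnc hd hc (.inl h1))

theorem mapsTo_innerEnd (hF : ∀ c ∈ F, IsChordOn L R c) :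
    Set.MapsTo (innerEnd F) F (Finset.Ioo L R) := by
  intro c hc
  obtain ⟨h1, h2, h3⟩ := hF c hc
  have := add_one_le_innerEnd (F := F) c
  have := innerEnd_lt (F := F) h2
  rw [Finset.coe_Ioo, Set.mem_Ioo]
  omega

theorem card_le_of_noncrossing (hF : ∀ c ∈ F, IsChordOn L R c) (hnc : Noncrossing F)
    (hLR : L < R) : (F.card : ℤ) ≤ R - L - 1 := by
  have := Finset.card_le_card_of_injOn _ (mapsTo_innerEnd hF)
    (injOn_innerEnd (fun c hc => (hF c hc).2.1) hnc)
  rw [Int.card_Ioo] at this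
  omega

theorem surjOn_innerEnd (hF : ∀ c ∈ F, IsChordOn L R c) (hnc : Noncrossing F)
    (hLR : (L, R) ∈ F) (hmax : ∀ c, IsChordOn L R c → (∀ d ∈ F, ¬ Cross c d) → c ∈ F) :
    Set.SurjOn (innerEnd F) F (Finset.Ioo L R) := by
  intro z hz
  rw [Finset.coe_Ioo, Set.mem_Ioo] at hz
  -- a shortest chord of `F` with `z` strictly inside has inner end `z`
  obtain ⟨c, hc, hmin⟩ := (F.filter fun c => c.1 < z ∧ z < c.2).exists_min_image
    (fun c => c.2 - c.1) ⟨(L, R), Finset.mem_filter.2 ⟨hLR, hz⟩⟩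
  obtain ⟨hcF, hcz⟩ := Finset.mem_filter.1 hc
  have hshort : ∀ d ∈ F, c.1 ≤ d.1 → d.1 < z → z < d.2 → d.2 ≤ c.2 →
      d.1 = c.1 ∧ d.2 = c.2 := by
    intro d hd h1 h2 h3 h4
    have := hmin d (Finset.mem_filter.2 ⟨hd, h2, h3⟩)
    omega
  refine ⟨c, hcF, le_antisymm ?_ ?_⟩
  · rcases innerEnd_eq_or_mem (F := F) c with h | ⟨h1, h2⟩
    · omega
    · by_contra! hz'
      have := hshort _ h1 le_rfl (by omega) hz' h2.le
      omega
  · obtain ⟨hc1, hc2, hc3⟩ := hF c hcF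
    rcases eq_or_lt_of_le (show c.1 + 1 ≤ z by omega) with h | h
    · exact h ▸ add_one_le_innerEnd c
    refine le_innerEnd_of_mem (hmax _ ⟨hc1, by omega, by omega⟩ fun d hd hcross => ?_) hcz.2
    obtain ⟨hd1, hd2, hd3⟩ := hF d hd
    have h1 := hnc c hcF d hd
    have h2 := hnc d hd c hcF
    unfold Cross at hcross h1 h2
    rcases hcross with hcross | hcross
    · have := hshort d hd (by omega) (by omega) (by omega) (by omega)
      omega
    · omega

theorem card_eq_of_maximal (hF : ∀ c ∈ F, IsChordOn L R c) (hnc : Noncrossing F)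
    (hLR : (L, R) ∈ F) (hmax : ∀ c, IsChordOn L R c → (∀ d ∈ F, ¬ Cross c d) → c ∈ F) :
    (F.card : ℤ) = R - L - 1 := by
  have := Finset.card_nbij _ (mapsTo_innerEnd hF) (injOn_innerEnd (fun c hc => (hF c hc).2.1) hnc)
    (surjOn_innerEnd hF hnc hLR hmax)
  obtain ⟨-, h, -⟩ := hF _ hLR
  rw [this, Int.card_Ioo]
  omega

end Counting

section Residues

variable {n : ℕ}

theorem eq_or_add_le_or_add_le_of_intCast_eq {x y : ℤ} (h : (x : ZMod n) = y) :
    x = y ∨ x + n ≤ y ∨ y + n ≤ x := by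
  obtain ⟨k, hk⟩ := (ZMod.intCast_eq_intCast_iff_dvd_sub x y n).1 h
  rcases lt_trichotomy k 0 with hk0 | rfl | hk0
  · exact .inr <| .inr <| by nlinarith
  · exact .inl <| by omega
  · exact .inr <| .inl <| by nlinarith

theorem exists_intCast_eq [NeZero n] (j : ZMod n) (L : ℤ) :
    ∃ x : ℤ, L ≤ x ∧ x < L + n ∧ (x : ZMod n) = j := by
  refine ⟨L + ((j - L).val : ℤ), by omega, by have := ZMod.val_lt (j - (L : ZMod n)); omega, ?_⟩
  push_cast
  rw [ZMod.natCast_val, ZMod.cast_id]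
  ring

theorem sum_Ioc_intCast [NeZero n] {M : Type*} [AddCommMonoid M] (f : ZMod n → M) (J : ℤ) :
    ∑ j ∈ Finset.Ioc J (J + n), f j = ∑ x, f x := by
  refine Finset.sum_bij (fun j _ => (j : ZMod n)) (fun _ _ => Finset.mem_univ _) ?_ ?_
    fun _ _ => rfl
  · intro x hx y hy h
    rw [Finset.mem_Ioc] at hx hy
    rcases eq_or_add_le_or_add_le_of_intCast_eq h with h | h | h <;> omega
  · intro j _
    obtain ⟨x, h1, h2, rfl⟩ := exists_intCast_eq j (J + 1)
    exact ⟨x, Finset.mem_Ioc.2 ⟨by omega, by omega⟩, rfl⟩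

theorem sum_Icc_natCast [NeZero n] {M : Type*} [AddCommMonoid M] (f : ZMod n → M) :
    ∑ j ∈ Finset.Icc 1 n, f j = ∑ x, f x := by
  refine Finset.sum_bij (fun j _ => (j : ZMod n)) (fun _ _ => Finset.mem_univ _) ?_ ?_
    fun _ _ => rfl
  · intro x hx y hy h
    rw [Finset.mem_Icc] at hx hy
    rw [← Int.cast_natCast, ← Int.cast_natCast (R := ZMod n) y] at h
    rcases eq_or_add_le_or_add_le_of_intCast_eq h with h | h | h <;> omega
  · intro j _
    obtain ⟨x, h1, h2, rfl⟩ := exists_intCast_eq j 1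
    refine ⟨x.toNat, Finset.mem_Icc.2 ⟨by omega, by omega⟩, ?_⟩
    rw [← Int.cast_natCast, Int.toNat_of_nonneg (by omega)]

end Residues

section PartialSums

variable {n : ℕ} (a : ZMod n → ℕ)

theorem resRep_mem_Icc [NeZero n] (p : ℤ) : 1 ≤ resRep n p ∧ resRep n p ≤ n := by
  have hn : (0 : ℤ) < n := by have := NeZero.pos n; omega
  have := Int.emod_lt_of_pos (p - 1) hn
  have := Int.emod_nonneg (p - 1) hn.ne'
  simp only [resRep]
  omega

theorem resRep_eq_of_intCast_eq {m : ℕ} {p : ℤ} (hm : 1 ≤ m) (hmn : m ≤ n)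
    (h : (m : ZMod n) = p) : resRep n p = m := by
  have hmod : (p - 1) % (n : ℤ) = ((m : ℤ) - 1) % n :=
    (ZMod.intCast_eq_intCast_iff' _ _ _).1 (by push_cast; rw [h])
  rw [resRep, hmod, Int.emod_eq_of_lt (by omega) (by omega)]
  omega

theorem intCast_resRep [NeZero n] (p : ℤ) : ((resRep n p : ℕ) : ZMod n) = p := by
  have h : (0 : ℤ) ≤ (p - 1) % n := Int.emod_nonneg _ (by have := NeZero.pos n; omega)
  rw [resRep, Nat.cast_add, ← Int.cast_natCast, Int.toNat_of_nonneg h, ZMod.intCast_mod]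
  push_cast
  ring

theorem psum_congr {p q : ℤ} (h : (p : ZMod n) = q) : psum n a p = psum n a q := by
  have hmod : (p - 1) % (n : ℤ) = (q - 1) % n :=
    (ZMod.intCast_eq_intCast_iff' _ _ _).1 (by push_cast; rw [h])
  simp only [psum, resRep, hmod]

theorem psum_add_one [NeZero n] (h0 : psum n a n = 0) (p : ℤ) :
    psum n a (p + 1) = psum n a p + a ((p + 1 : ℤ) : ZMod n) - 1 := by
  have hr := resRep_mem_Icc (n := n) p
  rcases eq_or_lt_of_le hr.2 with hrn | hrn
  · have hp : (p : ZMod n) = 0 := by rw [← intCast_resRep p, hrn, ZMod.natCast_self]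
    have h1 : resRep n (p + 1) = 1 :=
      resRep_eq_of_intCast_eq le_rfl NeZero.one_le (by push_cast [hp]; ring)
    have h2 : psum n a p = 0 := by
      rw [← h0]; exact psum_congr a (by rw [hp, Int.cast_natCast, ZMod.natCast_self])
    rw [h2, psum, h1, Finset.Icc_self, Finset.sum_singleton]
    push_cast [hp]
    ring_nf
  · have h1 : resRep n (p + 1) = resRep n p + 1 :=
      resRep_eq_of_intCast_eq (by omega) hrn (by push_cast; rw [intCast_resRep])
    rw [psum, psum, h1, Finset.sum_Icc_succ_top (by omega)]
    push_cast
    rw [intCast_resRep]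
    ring

theorem psum_sub_psum [NeZero n] (h0 : psum n a n = 0) {p q : ℤ} (hpq : p ≤ q) :
    psum n a q - psum n a p = ∑ j ∈ Finset.Ioc p q, ((a j : ℤ) - 1) := by
  induction q, hpq using Int.leInduction with
  | base => simp
  | succ q hpq ih =>
    rw [← Finset.insert_Ioc_right_eq_Ioc_add_one hpq, Finset.sum_insert (by simp),
      psum_add_one a h0]
    linarith

theorem psum_le_pnorm [NeZero n] (p : ℤ) : psum n a p ≤ pnorm n a := by
  refine le_csSup ((Set.finite_Icc 1 n).image _).bddAbove ⟨resRep n p, ?_, ?_⟩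
  · exact resRep_mem_Icc p
  · exact psum_congr a (by rw [Int.cast_natCast, intCast_resRep])

theorem pnorm_le [NeZero n] {b : ℤ} (h : ∀ p, psum n a p ≤ b) : pnorm n a ≤ b :=
  csSup_le ⟨_, 1, ⟨le_rfl, NeZero.one_le⟩, rfl⟩ (by rintro _ ⟨i, -, rfl⟩; exact h i)

end PartialSums

section Triangulation

variable {n : ℕ} {X : Set (Arc n)}

theorem Arc.Compatible.symm {a b : Arc n} (h : a.Compatible b) : b.Compatible a := by
  cases a <;> cases b
  · rintro ⟨x, y, hx, hy, hxy⟩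
    exact h ⟨y, x, hy, hx, hxy.symm⟩
  all_goals exact h

theorem IsTriangulation.mem_of_forall_compatible (hX : IsTriangulation n X) {a : Arc n}
    (ha : a.IsAdmissible) (haa : a.Compatible a) (h : ∀ b ∈ X, a.Compatible b) : a ∈ X := by
  have hY : PairwiseCompatible n (insert a X) := by
    refine ⟨?_, ?_⟩
    · rintro b (rfl | hb)
      exacts [ha, hX.1.1 b hb]
    · rintro b (rfl | hb) c (rfl | hc)
      exacts [haa, h c hc, (h b hb).symm, hX.1.2 b hb c hc]
  rw [← hX.2 _ hY (Set.subset_insert a X)]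
  exact Set.mem_insert a X

theorem IsTriangulation.exists_proj_mem (hX : IsTriangulation n X) : ∃ j, Arc.proj j ∈ X := by
  classical
  by_cases h : ∃ i t, Arc.inner i t ∈ X
  · obtain ⟨i, t, hit⟩ := h
    -- the projective arc from the start of a longest inner arc crosses nothing
    obtain ⟨j, hj⟩ := Nat.findGreatest_spec (P := fun t => ∃ i, Arc.inner i t ∈ X)
      (hX.1.1 _ hit).2 ⟨i, hit⟩
    refine ⟨j, hX.mem_of_forall_compatible trivial trivial fun b hb => ?_⟩
    cases b with
    | proj => trivial
    | inner u s =>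
      rintro ⟨x, y, hx, hy, hxy, hyx⟩
      have hs := Nat.le_findGreatest (P := fun t => ∃ i, Arc.inner i t ∈ X)
        (hX.1.1 _ hb).2 ⟨u, hb⟩
      exact hX.1.2 _ hb _ hj ⟨x, y, hx, hy, .inl ⟨hxy, hyx, by omega⟩⟩
  · simp only [not_exists] at h
    refine ⟨0, hX.mem_of_forall_compatible trivial trivial fun b hb => ?_⟩
    cases b with
    | proj => trivial
    | inner i t => exact absurd hb (h i t)

end Triangulation

/-- Cutting the punctured `n`-gon along the projective arc at `J` leaves a polygon with vertices
`J, J + 1, …, J + n, J + n + 1`, the last one being the puncture; `arcOf n J c` is the arc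
represented by its chord `c`. The fan chords `(x, J + n + 1)` represent the projective arcs. -/
def arcOf (n : ℕ) (J : ℤ) (c : ℤ × ℤ) : Arc n :=
  if c.2 = J + n + 1 then .proj c.1 else .inner c.1 (c.2 - c.1).toNat

open Classical in
noncomputable def chords (n : ℕ) (X : Set (Arc n)) (J : ℤ) : Finset (ℤ × ℤ) :=
  (Finset.Icc J (J + n + 1) ×ˢ Finset.Icc J (J + n + 1)).filter
    fun c => IsChordOn J (J + n + 1) c ∧ arcOf n J c ∈ X

/-- The lift to `J + 1, …, J + n` of the terminal point of `arcOf n J c`. -/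
def liftTerminal (n : ℕ) (J : ℤ) (c : ℤ × ℤ) : ℤ :=
  if c.2 = J + n + 1 then (if c.1 = J then J + n else c.1) else c.2

section ChordModel

variable {n : ℕ} {X : Set (Arc n)} {J : ℤ}

theorem mem_chords {c : ℤ × ℤ} :
    c ∈ chords n X J ↔ IsChordOn J (J + n + 1) c ∧ arcOf n J c ∈ X := by
  simp only [chords, Finset.mem_filter, Finset.mem_product, Finset.mem_Icc, and_iff_right_iff_imp]
  rintro ⟨⟨h1, h2, h3⟩, -⟩
  omega

theorem terminal_arcOf {c : ℤ × ℤ} (hc : IsChordOn J (J + n + 1) c) :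
    (arcOf n J c).terminal = (liftTerminal n J c : ZMod n) := by
  unfold arcOf liftTerminal
  split_ifs with h1 h2
  · simp [Arc.terminal, h2]
  · rfl
  · rw [Arc.terminal, ← Int.cast_natCast, Int.toNat_of_nonneg (by obtain ⟨-, h, -⟩ := hc; omega)]
    push_cast
    ring

theorem liftTerminal_mem_Ioc {c : ℤ × ℤ} (hc : IsChordOn J (J + n + 1) c) :
    J < liftTerminal n J c ∧ liftTerminal n J c ≤ J + n := by
  obtain ⟨h1, h2, h3⟩ := hc
  unfold liftTerminal
  split_ifs <;> omega

theorem compatible_arcOf_iff {c d : ℤ × ℤ} (hc : IsChordOn J (J + n + 1) c)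
    (hd : IsChordOn J (J + n + 1) d) :
    (arcOf n J c).Compatible (arcOf n J d) ↔ ¬ Cross c d := by
  obtain ⟨hc1, hc2, hc3⟩ := hc
  obtain ⟨hd1, hd2, hd3⟩ := hd
  have shift : ∀ x y x' y' : ℤ, (x : ZMod n) = x' → (y : ZMod n) = y' →
      y - x = y' - x' ∨ y - x + n ≤ y' - x' ∨ y' - x' + n ≤ y - x := fun x y x' y' hx hy =>
    eq_or_add_le_or_add_le_of_intCast_eq (by push_cast; rw [hx, hy])
  unfold arcOf Cross
  split_ifs with hcJ hdJ hdJ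
  · simp only [Arc.Compatible, true_iff]
    omega
  · constructor
    · rintro h hcr
      exact h ⟨d.1, c.1, rfl, rfl, by omega, by omega⟩
    · rintro h ⟨x, y, hx, hy, hxy⟩
      rcases shift x y _ _ hx hy with h' | h' | h' <;> omega
  · constructor
    · rintro h hcr
      exact h ⟨c.1, d.1, rfl, rfl, by omega, by omega⟩
    · rintro h ⟨x, y, hx, hy, hxy⟩
      rcases shift x y _ _ hx hy with h' | h' | h' <;> omega
  · constructor
    · rintro h hcr
      exact h ⟨c.1, d.1, rfl, rfl, by omega⟩
    · rintro h ⟨x, y, hx, hy, hxy⟩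
      rcases shift x y _ _ hx hy with h' | h' | h' <;> omega

theorem injOn_arcOf : Set.InjOn (arcOf n J) {c | IsChordOn J (J + n + 1) c} := by
  rintro c ⟨hc1, hc2, hc3⟩ d ⟨hd1, hd2, hd3⟩ h
  unfold arcOf at h
  split_ifs at h with hc hd hd <;>
    simp only [Arc.proj.injEq, Arc.inner.injEq] at h
  · rcases eq_or_add_le_or_add_le_of_intCast_eq h with h | h | h
    · exact Prod.ext h (by omega)
    all_goals omega
  · rcases eq_or_add_le_or_add_le_of_intCast_eq h.1 with h' | h' | h'
    · exact Prod.ext h' (by omega)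
    all_goals omega

theorem noncrossing_chords (hX : IsTriangulation n X) : Noncrossing (chords n X J) := by
  intro c hc d hd
  rw [mem_chords] at hc hd
  exact (compatible_arcOf_iff hc.1 hd.1).1 (hX.1.2 _ hc.2 _ hd.2)

theorem exists_mem_chords_arcOf_eq [NeZero n] (hX : IsTriangulation n X)
    (hJ : Arc.proj (J : ZMod n) ∈ X) {b : Arc n} (hb : b ∈ X) :
    ∃ c ∈ chords n X J, arcOf n J c = b := by
  cases b with
  | proj j =>
    obtain ⟨x, h1, h2, rfl⟩ := exists_intCast_eq j J
    have hc : arcOf n J (x, J + n + 1) = .proj x := if_pos rfl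
    exact ⟨_, mem_chords.2 ⟨⟨h1, by omega, le_rfl⟩, hc ▸ hb⟩, hc⟩
  | inner i t =>
    obtain ⟨ht2, htn⟩ := hX.1.1 _ hb
    obtain ⟨x, h1, h2, rfl⟩ := exists_intCast_eq i J
    have hxt : x + t ≤ J + n := by
      by_contra! h
      exact hX.1.2 _ hb _ hJ ⟨x, J + n, rfl, by simp, by omega, by omega⟩
    have hc : arcOf n J (x, x + t) = .inner x t := by
      rw [arcOf, if_neg (by omega)]
      congr
      omega
    exact ⟨_, mem_chords.2 ⟨⟨h1, by omega, by omega⟩, hc ▸ hb⟩, hc⟩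

theorem mem_chords_of_forall_not_cross [NeZero n] (hX : IsTriangulation n X)
    (hJ : Arc.proj (J : ZMod n) ∈ X) {c : ℤ × ℤ} (hc : IsChordOn J (J + n + 1) c)
    (h : ∀ d ∈ chords n X J, ¬ Cross c d) : c ∈ chords n X J := by
  refine mem_chords.2 ⟨hc, hX.mem_of_forall_compatible ?_ ((compatible_arcOf_iff hc hc).2 ?_) ?_⟩
  · obtain ⟨h1, h2, h3⟩ := hc
    unfold arcOf
    split_ifs
    exacts [trivial, ⟨by omega, by omega⟩]
  · unfold Cross
    omega
  · intro b hb
    obtain ⟨d, hd, rfl⟩ := exists_mem_chords_arcOf_eq hX hJ hb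
    exact (compatible_arcOf_iff hc (mem_chords.1 hd).1).2 (h d hd)

theorem ear_mem_chords [NeZero n] (hJ : Arc.proj (J : ZMod n) ∈ X) :
    (J, J + n + 1) ∈ chords n X J :=
  mem_chords.2 ⟨⟨le_rfl, by have := NeZero.one_le (n := n); omega, le_rfl⟩,
    by rwa [arcOf, if_pos rfl]⟩

theorem card_chords_window [NeZero n] (hX : IsTriangulation n X)
    (hJ : Arc.proj (J : ZMod n) ∈ X) {u v : ℤ} (huv : (u, v) ∈ chords n X J) :
    (((chords n X J).filter fun c => u ≤ c.1 ∧ c.2 ≤ v).card : ℤ) = v - u - 1 := by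
  have hu := (mem_chords.1 huv).1
  refine card_eq_of_maximal (fun c hc => ?_) ((noncrossing_chords hX).filter _)
    (Finset.mem_filter.2 ⟨huv, le_rfl, le_rfl⟩) fun c hc hnc => ?_
  · obtain ⟨hc, h1, h2⟩ := Finset.mem_filter.1 hc
    exact ⟨h1, (mem_chords.1 hc).1.2.1, h2⟩
  · obtain ⟨hu1, hu2, hu3⟩ := hu
    obtain ⟨hc1, hc2, hc3⟩ := hc
    refine Finset.mem_filter.2 ⟨mem_chords_of_forall_not_cross hX hJ ⟨by omega, hc2, by omega⟩
      fun d hd hcd => ?_, hc1, hc3⟩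
    by_cases hdW : u ≤ d.1 ∧ d.2 ≤ v
    · exact hnc d (Finset.mem_filter.2 ⟨hd, hdW⟩) hcd
    · have := noncrossing_chords hX _ huv _ hd
      obtain ⟨hd1, hd2, hd3⟩ := (mem_chords.1 hd).1
      unfold Cross at this hcd
      omega

theorem card_chords [NeZero n] (hX : IsTriangulation n X) (hJ : Arc.proj (J : ZMod n) ∈ X) :
    ((chords n X J).card : ℤ) = n := by
  have := card_chords_window hX hJ (ear_mem_chords hJ)
  rw [Finset.filter_true_of_mem fun c hc => by
    obtain ⟨h1, -, h3⟩ := (mem_chords.1 hc).1; exact ⟨h1, h3⟩] at this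
  omega

theorem topSeq_eq_card [NeZero n] (hX : IsTriangulation n X) (hJ : Arc.proj (J : ZMod n) ∈ X)
    {p : ℤ} (hp1 : J < p) (hp2 : p ≤ J + n) :
    topSeq n X p = ((chords n X J).filter fun c => liftTerminal n J c = p).card := by
  have himage : {a ∈ X | a.terminal = (p : ZMod n)} =
      arcOf n J '' ↑((chords n X J).filter fun c => liftTerminal n J c = p) := by
    ext a
    simp only [Set.mem_ofPred_eq, Set.mem_image, Finset.coe_filter]
    constructor
    · rintro ⟨ha, hat⟩
      obtain ⟨c, hc, rfl⟩ := exists_mem_chords_arcOf_eq hX hJ ha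
      have hc' := (mem_chords.1 hc).1
      rw [terminal_arcOf hc'] at hat
      have := liftTerminal_mem_Ioc hc'
      refine ⟨c, ⟨hc, ?_⟩, rfl⟩
      rcases eq_or_add_le_or_add_le_of_intCast_eq hat with h | h | h <;> omega
    · rintro ⟨c, ⟨hc, rfl⟩, rfl⟩
      exact ⟨(mem_chords.1 hc).2, terminal_arcOf (mem_chords.1 hc).1⟩
  rw [topSeq, himage, Set.InjOn.ncard_image, Set.ncard_coe_finset]
  exact injOn_arcOf.mono fun c hc => (mem_chords.1 (Finset.mem_of_mem_filter c hc)).1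

theorem sum_topSeq_Ioc [NeZero n] (hX : IsTriangulation n X) (hJ : Arc.proj (J : ZMod n) ∈ X)
    {p q : ℤ} (hJp : J ≤ p) (hqJ : q ≤ J + n) :
    ∑ j ∈ Finset.Ioc p q, (topSeq n X j : ℤ) =
      ((chords n X J).filter fun c => p < liftTerminal n J c ∧ liftTerminal n J c ≤ q).card := by
  rw [Finset.card_eq_sum_card_fiberwise (f := liftTerminal n J) (t := Finset.Ioc p q)
    fun c hc => Finset.mem_Ioc.2 (Finset.mem_filter.1 hc).2]
  push_cast
  refine Finset.sum_congr rfl fun j hj => ?_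
  rw [Finset.mem_Ioc] at hj
  rw [topSeq_eq_card hX hJ (by omega) (by omega), Finset.filter_filter]
  congr 2
  refine Finset.filter_congr fun c _ => ⟨fun h => ⟨by omega, h⟩, fun h => h.2⟩

theorem psum_topSeq_natCast_eq_zero [NeZero n] (hX : IsTriangulation n X)
    (hJ : Arc.proj (J : ZMod n) ∈ X) : psum n (topSeq n X) n = 0 := by
  have hsum : ∑ x, (topSeq n X x : ℤ) = n := by
    rw [← sum_Ioc_intCast _ J, sum_topSeq_Ioc hX hJ le_rfl le_rfl, Finset.filter_true_of_mem
      fun c hc => liftTerminal_mem_Ioc (mem_chords.1 hc).1, card_chords hX hJ]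
  rw [psum, resRep_eq_of_intCast_eq NeZero.one_le le_rfl (by simp),
    sum_Icc_natCast (fun x => (topSeq n X x : ℤ) - 1), Finset.sum_sub_distrib, hsum]
  simp

theorem psum_sub_psum_eq_card [NeZero n] (hX : IsTriangulation n X)
    (hJ : Arc.proj (J : ZMod n) ∈ X) {p q : ℤ} (hJp : J ≤ p) (hpq : p ≤ q) (hqJ : q ≤ J + n) :
    psum n (topSeq n X) q - psum n (topSeq n X) p =
      ((chords n X J).filter fun c => p < liftTerminal n J c ∧ liftTerminal n J c ≤ q).card
        - (q - p) := by
  rw [psum_sub_psum _ (psum_topSeq_natCast_eq_zero hX hJ) hpq, Finset.sum_sub_distrib,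
    sum_topSeq_Ioc hX hJ hJp hqJ]
  simp only [Finset.sum_const, Int.card_Ioc, nsmul_eq_mul, mul_one]
  omega

end ChordModel

section Levels

variable {n : ℕ} [NeZero n] {X : Set (Arc n)} {J : ℤ}

theorem psum_sub_psum_eq_card_window (hX : IsTriangulation n X)
    (hJ : Arc.proj (J : ZMod n) ∈ X) {u v m : ℤ} (huv : (u, v) ∈ chords n X J)
    (hv : v ≤ J + n) (hum : u ≤ m) (hmv : m < v) :
    psum n (topSeq n X) m - psum n (topSeq n X) u =
      ((chords n X J).filter fun c => u ≤ c.1 ∧ c.2 ≤ m).card - (m - u) := by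
  obtain ⟨hu1, hu2, hu3⟩ : J ≤ u ∧ u + 2 ≤ v ∧ v ≤ J + n + 1 := (mem_chords.1 huv).1
  rw [psum_sub_psum_eq_card hX hJ hu1 hum (by omega)]
  congr 3
  refine Finset.filter_congr fun c hc => ?_
  have hcross := noncrossing_chords hX _ huv _ hc
  obtain ⟨hc1, hc2, hc3⟩ := (mem_chords.1 hc).1
  unfold liftTerminal Cross at *
  split_ifs <;> omega

theorem psum_lt_of_mem_chords (hX : IsTriangulation n X) (hJ : Arc.proj (J : ZMod n) ∈ X)
    {u v m : ℤ} (huv : (u, v) ∈ chords n X J) (hv : v ≤ J + n) (hum : u < m) (hmv : m < v) :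
    psum n (topSeq n X) m < psum n (topSeq n X) u := by
  have h := psum_sub_psum_eq_card_window hX hJ huv hv hum.le hmv
  have := card_le_of_noncrossing (L := u) (R := m)
    (F := (chords n X J).filter fun c => u ≤ c.1 ∧ c.2 ≤ m) (fun c hc => ?_)
    ((noncrossing_chords hX).filter _) hum
  · omega
  · obtain ⟨hc, h1, h2⟩ := Finset.mem_filter.1 hc
    exact ⟨h1, (mem_chords.1 hc).1.2.1, h2⟩

theorem psum_le_psum_add_one_of_mem_chords (hX : IsTriangulation n X)
    (hJ : Arc.proj (J : ZMod n) ∈ X) {u v : ℤ} (huv : (u, v) ∈ chords n X J)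
    (hv : v ≤ J + n) : psum n (topSeq n X) u ≤ psum n (topSeq n X) v + 1 := by
  obtain ⟨hu1, hu2, hu3⟩ : J ≤ u ∧ u + 2 ≤ v ∧ v ≤ J + n + 1 := (mem_chords.1 huv).1
  have h := psum_sub_psum_eq_card hX hJ hu1 (by omega : u ≤ v) hv
  have hwin := card_chords_window hX hJ huv
  have hsub : ((chords n X J).filter fun c => u ≤ c.1 ∧ c.2 ≤ v) ⊆
      (chords n X J).filter fun c => u < liftTerminal n J c ∧ liftTerminal n J c ≤ v := by
    intro c hc
    obtain ⟨hc, h1, h2⟩ := Finset.mem_filter.1 hc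
    obtain ⟨-, hc2, -⟩ := (mem_chords.1 hc).1
    refine Finset.mem_filter.2 ⟨hc, ?_⟩
    unfold liftTerminal
    split_ifs <;> omega
  have := Finset.card_le_card hsub
  omega

theorem psum_eq_of_fan_mem (hX : IsTriangulation n X) (hJ : Arc.proj (J : ZMod n) ∈ X) {p : ℤ}
    (hp : (p, J + n + 1) ∈ chords n X J) : psum n (topSeq n X) p = psum n (topSeq n X) J := by
  obtain ⟨hp1, hp2, -⟩ : J ≤ p ∧ p + 2 ≤ J + n + 1 ∧ _ := (mem_chords.1 hp).1
  rcases eq_or_lt_of_le hp1 with rfl | hp1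
  · rfl
  -- the chords ending in `(p, J + n]` are those on the far side of the fan chord at `p`,
  -- with the chord at `J` in place of the one at `p`
  have hset : ((chords n X J).filter fun c => p < liftTerminal n J c ∧ liftTerminal n J c ≤ J + n)
      = insert (J, J + n + 1)
        (((chords n X J).filter fun c => p ≤ c.1 ∧ c.2 ≤ J + n + 1).erase (p, J + n + 1)) := by
    ext c
    simp only [Finset.mem_filter, Finset.mem_insert, Finset.mem_erase, ne_eq, Prod.ext_iff]
    by_cases hc : c ∈ chords n X J
    · have h1 := noncrossing_chords hX _ hp _ hc
      have h2 := noncrossing_chords hX _ hc _ hp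
      obtain ⟨hc1, hc2, hc3⟩ := (mem_chords.1 hc).1
      unfold liftTerminal Cross at *
      dsimp only at h1 h2
      simp only [hc, true_and]
      split_ifs <;> omega
    · have hear : c ≠ (J, J + n + 1) := fun h => hc (h ▸ ear_mem_chords hJ)
      simp only [hc, false_and, and_false, or_false, false_iff, not_and]
      exact fun h1 h2 => hear (Prod.ext h1 h2)
  have hcard : (((chords n X J).filter fun c =>
      p < liftTerminal n J c ∧ liftTerminal n J c ≤ J + n).card : ℤ) = J + n - p := by
    rw [hset, Finset.card_insert_of_notMem (by simp; omega), Finset.card_erase_of_mem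
      (Finset.mem_filter.2 ⟨hp, le_rfl, le_rfl⟩)]
    have := card_chords_window hX hJ hp
    have : 0 < ((chords n X J).filter fun c => p ≤ c.1 ∧ c.2 ≤ J + n + 1).card :=
      Finset.card_pos.2 ⟨_, Finset.mem_filter.2 ⟨hp, le_rfl, le_rfl⟩⟩
    omega
  have h := psum_sub_psum_eq_card hX hJ hp1.le (by omega : p ≤ J + n) le_rfl
  rw [psum_congr _ (show ((J + n : ℤ) : ZMod n) = J by simp)] at h
  omega

theorem exists_mem_chords_between_fans (hX : IsTriangulation n X)
    (hJ : Arc.proj (J : ZMod n) ∈ X) {p : ℤ} (hp1 : J < p) (hp2 : p < J + n)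
    (hp : (p, J + n + 1) ∉ chords n X J) :
    ∃ f g, (f, J + n + 1) ∈ chords n X J ∧ f < p ∧ p < g ∧ g ≤ J + n ∧ (f, g) ∈ chords n X J := by
  classical
  -- the nearest fan chords around `p`, with `J + n` standing for the one at `J`
  set fans := (Finset.Ico J p).filter fun x => (x, J + n + 1) ∈ chords n X J
  set fans' := (Finset.Ioc p (J + n)).filter fun x => x = J + n ∨ (x, J + n + 1) ∈ chords n X J
  obtain ⟨f, hf, hfmax⟩ : ∃ f ∈ fans, ∀ x ∈ fans, x ≤ f :=
    ⟨_, fans.max'_mem ⟨J, Finset.mem_filter.2 ⟨Finset.mem_Ico.2 ⟨le_rfl, hp1⟩,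
      ear_mem_chords hJ⟩⟩, fun x hx => fans.le_max' x hx⟩
  obtain ⟨g, hg, hgmin⟩ : ∃ g ∈ fans', ∀ x ∈ fans', g ≤ x :=
    ⟨_, fans'.min'_mem ⟨J + n, Finset.mem_filter.2 ⟨Finset.mem_Ioc.2 ⟨hp2, le_rfl⟩, .inl rfl⟩⟩,
      fun x hx => fans'.min'_le x hx⟩
  obtain ⟨hf1, hfF⟩ := Finset.mem_filter.1 hf
  obtain ⟨hg1, hgF⟩ := Finset.mem_filter.1 hg
  rw [Finset.mem_Ico] at hf1
  rw [Finset.mem_Ioc] at hg1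
  refine ⟨f, g, hfF, hf1.2, hg1.1, hg1.2, mem_chords_of_forall_not_cross hX hJ
    ⟨hf1.1, by omega, by omega⟩ fun d hd hcross => ?_⟩
  obtain ⟨hd1, hd2, hd3⟩ := (mem_chords.1 hd).1
  unfold Cross at hcross
  dsimp only at hcross
  rcases eq_or_lt_of_le hd3 with hdJ | hdJ
  · have hd' : (d.1, J + n + 1) ∈ chords n X J := hdJ ▸ hd
    rcases lt_trichotomy d.1 p with h | rfl | h
    · have := hfmax d.1 (Finset.mem_filter.2 ⟨Finset.mem_Ico.2 ⟨hd1, h⟩, hd'⟩)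
      omega
    · exact hp hd'
    · have := hgmin d.1 (Finset.mem_filter.2 ⟨Finset.mem_Ioc.2 ⟨h, by omega⟩, .inr hd'⟩)
      omega
  · rcases hcross with h | h
    · have := noncrossing_chords hX _ hd _ (hgF.resolve_left (by omega))
      unfold Cross at this
      omega
    · have := noncrossing_chords hX _ hd _ hfF
      unfold Cross at this
      omega

theorem psum_lt_of_fan_notMem (hX : IsTriangulation n X) (hJ : Arc.proj (J : ZMod n) ∈ X)
    {p : ℤ} (hp1 : J < p) (hp2 : p < J + n) (hp : (p, J + n + 1) ∉ chords n X J) :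
    psum n (topSeq n X) p < psum n (topSeq n X) J := by
  obtain ⟨f, g, hf, hfp, hpg, hg, hfg⟩ := exists_mem_chords_between_fans hX hJ hp1 hp2 hp
  calc psum n (topSeq n X) p < psum n (topSeq n X) f := psum_lt_of_mem_chords hX hJ hfg hg hfp hpg
    _ = psum n (topSeq n X) J := psum_eq_of_fan_mem hX hJ hf

theorem pnorm_topSeq_eq (hX : IsTriangulation n X) (hJ : Arc.proj (J : ZMod n) ∈ X) :
    pnorm n (topSeq n X) = psum n (topSeq n X) J := by
  refine le_antisymm (pnorm_le _ fun p => ?_) (psum_le_pnorm _ J)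
  obtain ⟨q, hq1, hq2, hq⟩ := exists_intCast_eq (p : ZMod n) (J + 1)
  rw [← psum_congr _ hq]
  rcases eq_or_lt_of_le (show q ≤ J + n by omega) with rfl | hqJ
  · exact (psum_congr _ (by simp)).le
  by_cases hfan : (q, J + n + 1) ∈ chords n X J
  · exact (psum_eq_of_fan_mem hX hJ hfan).le
  · exact (psum_lt_of_fan_notMem hX hJ (by omega) hqJ hfan).le

theorem psum_lt_and_exists_of_mem_chords (hX : IsTriangulation n X)
    (hJ : Arc.proj (J : ZMod n) ∈ X) {k l : ℤ} (hkl : (k, l) ∈ chords n X J) (hl : l ≤ J + n) :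
    (∀ m : ℤ, k + 1 ≤ m → m ≤ l - 1 → psum n (topSeq n X) m < psum n (topSeq n X) k) ∧
      ∃ s : ℤ, 1 ≤ s ∧ s ≤ (topSeq n X l : ℤ) - deltaInt n (topSeq n X) l ∧
        psum n (topSeq n X) k = psum n (topSeq n X) (l - 1) + s := by
  obtain ⟨-, hkl2, -⟩ : J ≤ k ∧ k + 2 ≤ l ∧ _ := (mem_chords.1 hkl).1
  refine ⟨fun m h1 h2 => psum_lt_of_mem_chords hX hJ hkl hl (by omega) (by omega),
    psum n (topSeq n X) k - psum n (topSeq n X) (l - 1), ?_, ?_, by ring⟩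
  · have := psum_lt_of_mem_chords hX hJ hkl hl (m := l - 1) (by omega) (by omega)
    omega
  · have hstep := psum_add_one _ (psum_topSeq_natCast_eq_zero hX hJ) (l - 1)
    rw [sub_add_cancel] at hstep
    have : psum n (topSeq n X) k ≤ psum n (topSeq n X) l + 1 - deltaInt n (topSeq n X) l := by
      unfold deltaInt
      split_ifs with h
      · linarith [psum_le_pnorm (topSeq n X) k]
      · linarith [psum_le_psum_add_one_of_mem_chords hX hJ hkl hl]
    omega

theorem mem_chords_of_psum_lt (hX : IsTriangulation n X) (hJ : Arc.proj (J : ZMod n) ∈ X)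
    {k l : ℤ} (hk : J ≤ k) (hkl : k + 2 ≤ l) (hl : l ≤ J + n)
    (hfan : ∀ f, k < f → f < l → (f, J + n + 1) ∉ chords n X J)
    (hlt : ∀ m : ℤ, k + 1 ≤ m → m ≤ l - 1 → psum n (topSeq n X) m < psum n (topSeq n X) k)
    (hs : psum n (topSeq n X) k ≤ psum n (topSeq n X) (l - 1) + topSeq n X l) :
    (k, l) ∈ chords n X J := by
  refine mem_chords_of_forall_not_cross hX hJ ⟨hk, hkl, by omega⟩ fun d hd hcross => ?_
  obtain ⟨hd1, hd2, hd3⟩ := (mem_chords.1 hd).1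
  unfold Cross at hcross
  dsimp only at hcross
  rcases eq_or_lt_of_le hd3 with hdJ | hdJ
  · exact hfan d.1 (by omega) (by omega) (hdJ ▸ hd)
  have hstep := psum_add_one _ (psum_topSeq_natCast_eq_zero hX hJ) (l - 1)
  rw [sub_add_cancel] at hstep
  rcases hcross with h | h
  · have := psum_lt_of_mem_chords hX hJ hd (m := l) (by omega) (by omega) (by omega)
    have := hlt d.1 (by omega) (by omega)
    omega
  · have := psum_lt_of_mem_chords hX hJ hd (m := k) (by omega) (by omega) (by omega)
    have := psum_le_psum_add_one_of_mem_chords hX hJ hd (by omega)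
    have := hlt d.2 (by omega) (by omega)
    omega

end Levels

theorem inner_mem_iff_general (n : ℕ)
    (X : Set (Arc n)) (hX : IsTriangulation n X)
    (k l : ℤ) (h2 : 2 ≤ l - k) (hln : l - k ≤ (n : ℤ))
    (hmid : ∀ m : ℤ, k + 1 ≤ m → m ≤ l - 1 →
      psum n (topSeq n X) m < pnorm n (topSeq n X)) :
    Arc.inner ((k : ZMod n)) (l - k).toNat ∈ X ↔
      ((∀ m : ℤ, k + 1 ≤ m → m ≤ l - 1 →
          psum n (topSeq n X) m < psum n (topSeq n X) k) ∧
        ∃ s : ℤ, 1 ≤ s ∧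
          s ≤ ((topSeq n X) ((l : ℤ) : ZMod n) : ℤ) - deltaInt n (topSeq n X) l ∧
          psum n (topSeq n X) k = psum n (topSeq n X) (l - 1) + s) := by
  have : NeZero n := ⟨by omega⟩
  obtain ⟨j, hj⟩ := hX.exists_proj_mem
  obtain ⟨J, hJk, hkJ, rfl⟩ := exists_intCast_eq j (k - n + 1)
  have hnorm := pnorm_topSeq_eq hX hj
  have hl : l ≤ J + n := by
    by_contra! h
    have := hmid (J + n) (by omega) (by omega)
    rw [psum_congr _ (show ((J + n : ℤ) : ZMod n) = J by simp), hnorm] at this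
    exact this.false
  have hfan : ∀ f, k < f → f < l → (f, J + n + 1) ∉ chords n X J := fun f h1 h2 hf =>
    (hmid f (by omega) (by omega)).ne (by rw [psum_eq_of_fan_mem hX hj hf, hnorm])
  have harc : Arc.inner (k : ZMod n) (l - k).toNat = arcOf n J (k, l) := by
    rw [arcOf, if_neg (by dsimp only; omega)]
  rw [harc, ← (mem_chords.trans (and_iff_right ⟨by omega, by omega, by omega⟩))]
  refine ⟨fun h => psum_lt_and_exists_of_mem_chords hX hj h hl, fun ⟨hlt, s, hs1, hs2, hs3⟩ =>
    mem_chords_of_psum_lt hX hj (by omega) (by omega) hl hfan hlt ?_⟩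
  have : 0 ≤ deltaInt n (topSeq n X) l := by unfold deltaInt; split_ifs <;> norm_num
  omega

/-- **Adachi, Lemma (newlem1)(2).** Let `X` be a triangulation of the
punctured `n`-gon, `a := top(X)`, and let `k < l` be integers with
`2 ≤ l − k ≤ n` such that `a'_m < ‖a'‖` for every integer `m` with
`k + 1 ≤ m ≤ l − 1`. Then the inner arc `(k mod n, l − k)` belongs to `X` if
and only if: (a) `a'_m < a'_k` for every integer `m` with `k+1 ≤ m ≤ l−1`;
and (b) there exists an integer `s` with `1 ≤ s ≤ a_{(l)_n} − δ_l` and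
`a'_k = a'_{l−1} + s`. -/
theorem inner_mem_iff (n : ℕ) (hn : 0 < n)
    (X : Set (Arc n)) (hX : IsTriangulation n X)
    (k l : ℤ) (hkl : k < l) (h2 : 2 ≤ l - k) (hln : l - k ≤ (n : ℤ))
    (hmid : ∀ m : ℤ, k + 1 ≤ m → m ≤ l - 1 →
      psum n (topSeq n X) m < pnorm n (topSeq n X)) :
    Arc.inner ((k : ZMod n)) (l - k).toNat ∈ X ↔
      ((∀ m : ℤ, k + 1 ≤ m → m ≤ l - 1 →
          psum n (topSeq n X) m < psum n (topSeq n X) k) ∧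
        ∃ s : ℤ, 1 ≤ s ∧
          s ≤ ((topSeq n X) ((l : ℤ) : ZMod n) : ℤ) - deltaInt n (topSeq n X) l ∧
          psum n (topSeq n X) k = psum n (topSeq n X) (l - 1) + s) :=
  inner_mem_iff_general n X hX k l h2 hln hmid

end Punctured
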